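/- arXiv:0909.3043 — 5 statements merged into one kernel-verified Lean document; each statement's English description precedes it below -/
import Mathlib

section
/- For all r, r' > 0, one has ∫_{-1}^{1} dt / sqrt(r^2 + r'^2 - 2 r r' t) = 2 / max(r, r'). -/
/-! After the substitution `x = r² + r'² - 2 r r' t` the integral becomes
`(2 r r')⁻¹ ∫_{(r - r')²}^{(r + r')²} x^{-1/2} dx = (r + r' - |r - r'|) / (r r') = 2 min(r, r') / (r r')`,
and `min(r, r') / (r r') = 1 / max(r, r')`. -/

open Real intervalIntegral

theorem integral_one_div_sqrt {a b : ℝ} (ha : 0 ≤ a) (hb : 0 ≤ b) :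
    ∫ x in a..b, 1 / √x = 2 * (√b - √a) := by
  have hrpow : ∀ x ∈ Set.uIcc a b, 1 / √x = x ^ (-(1 / 2) : ℝ) := by
    intro x hx
    have hx0 : 0 ≤ x := le_trans (le_min ha hb) hx.1
    rw [rpow_neg hx0, ← sqrt_eq_rpow, one_div]
  rw [integral_congr hrpow, integral_rpow (Or.inl (by norm_num))]
  norm_num [← sqrt_eq_rpow]
  ring

theorem min_div_mul_eq_one_div_max {a b : ℝ} (ha : 0 < a) (hb : 0 < b) :
    min a b / (a * b) = 1 / max a b := by
  rw [← max_mul_min a b]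
  have : 0 < min a b := lt_min ha hb
  field_simp

theorem newton_theorem (r r' : ℝ) (hr : 0 < r) (hr' : 0 < r') :
    ∫ t in (-1:ℝ)..1, 1 / Real.sqrt (r ^ 2 + r' ^ 2 - 2 * r * r' * t)
      = 2 / max r r' := by
  have hrr' : 2 * r * r' ≠ 0 := by positivity
  calc ∫ t in (-1:ℝ)..1, 1 / √(r ^ 2 + r' ^ 2 - 2 * r * r' * t)
      = (2 * r * r')⁻¹ * ∫ x in (r' - r) ^ 2..(r + r') ^ 2, 1 / √x := by
        rw [integral_comp_sub_mul (fun x => 1 / √x) hrr', smul_eq_mul]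
        ring_nf
    _ = (2 * r * r')⁻¹ * (2 * (r + r' - |r' - r|)) := by
        rw [integral_one_div_sqrt (sq_nonneg _) (sq_nonneg _), sqrt_sq (by positivity),
          sqrt_sq_eq_abs]
    _ = 2 * (min r r' / (r * r')) := by
        rw [← two_nsmul_inf_eq_add_sub_abs_sub, nsmul_eq_mul, Nat.cast_ofNat]
        field_simp
    _ = 2 / max r r' := by
        rw [min_div_mul_eq_one_div_max hr hr', mul_one_div]
end

section
/- For nonnegative integers ℓ, ℓ', m, the integral ∫_{-1}^{1} P_ℓ(t) P_{ℓ'}(t) P_m(t) dt vanishes whenever m < |ℓ - ℓ'| or m > ℓ + ℓ'. -/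
/-!
By Rodrigues' formula, `P_n` is a multiple of the `n`-th derivative of `(X² - 1)ⁿ`, whose
derivatives of order `< n` vanish at `±1`. Integrating by parts `n` times therefore moves all
derivatives onto the other factor, so `P_n` is orthogonal on `[-1, 1]` to every polynomial of
degree `< n`. The triangle condition fails exactly when one index exceeds the sum of the other
two, and the product of the two smaller Legendre polynomials then has degree below the third.
-/

noncomputable def legendreP (n : ℕ) (x : ℝ) : ℝ :=
  (1 / ((2:ℝ) ^ n * n.factorial)) * iteratedDeriv n (fun y : ℝ => (y ^ 2 - 1) ^ n) x

open Polynomial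

theorem Polynomial.iteratedDeriv_eval {𝕜 : Type*} [NontriviallyNormedField 𝕜] (p : 𝕜[X])
    (k : ℕ) : iteratedDeriv k (fun x => p.eval x) = fun x => (derivative^[k] p).eval x := by
  induction k generalizing p with
  | zero => simp
  | succ k ih =>
    rw [iteratedDeriv_succ', Function.iterate_succ_apply, ← ih]
    congr 1
    funext x
    exact p.deriv

theorem Polynomial.isRoot_iterate_derivative_pow_of_lt {R : Type*} [CommRing R] {p : R[X]}
    {x : R} (hx : p.IsRoot x) {k n : ℕ} (hk : k < n) : (derivative^[k] (p ^ n)).IsRoot x := by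
  obtain ⟨g, hg⟩ := pow_sub_dvd_iterate_derivative_pow p n k
  rw [IsRoot, hg, eval_mul, eval_pow, hx.eq_zero, zero_pow (by omega), zero_mul]

theorem integral_derivative_mul_eq_neg {a b : ℝ} {p : ℝ[X]} (ha : p.IsRoot a) (hb : p.IsRoot b)
    (q : ℝ[X]) :
    ∫ t in a..b, (derivative p).eval t * q.eval t
      = -∫ t in a..b, p.eval t * (derivative q).eval t := by
  rw [intervalIntegral.integral_mul_deriv_eq_deriv_mul (fun x _ => p.hasDerivAt x)
    (fun x _ => q.hasDerivAt x) (p.derivative.continuous.intervalIntegrable _ _)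
    (q.derivative.continuous.intervalIntegrable _ _), ha.eq_zero, hb.eq_zero]
  ring

theorem integral_iterate_derivative_mul_eq {a b : ℝ} {w : ℝ[X]} {j : ℕ}
    (hw : ∀ k < j, (derivative^[k] w).IsRoot a ∧ (derivative^[k] w).IsRoot b) (q : ℝ[X]) :
    ∫ t in a..b, (derivative^[j] w).eval t * q.eval t
      = (-1) ^ j * ∫ t in a..b, w.eval t * (derivative^[j] q).eval t := by
  induction j generalizing q with
  | zero => simp
  | succ j ih =>
    obtain ⟨ha, hb⟩ := hw j j.lt_succ_self
    rw [Function.iterate_succ_apply', integral_derivative_mul_eq_neg ha hb,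
      ih (fun k hk => hw k (hk.trans j.lt_succ_self)), Function.iterate_succ_apply, pow_succ]
    ring

noncomputable def legendrePoly (n : ℕ) : ℝ[X] :=
  C (1 / ((2 : ℝ) ^ n * n.factorial)) * derivative^[n] ((X ^ 2 - 1) ^ n)

theorem legendreP_eq_eval (n : ℕ) (x : ℝ) : legendreP n x = (legendrePoly n).eval x := by
  have hpoly : (fun y : ℝ => (y ^ 2 - 1) ^ n) = fun y => ((X ^ 2 - 1 : ℝ[X]) ^ n).eval y := by
    simp
  rw [legendreP, legendrePoly, hpoly, iteratedDeriv_eval, eval_mul, eval_C]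

theorem natDegree_legendrePoly_le (n : ℕ) : (legendrePoly n).natDegree ≤ n := by
  have hpow : ((X ^ 2 - 1 : ℝ[X]) ^ n).natDegree ≤ 2 * n := by
    refine natDegree_pow_le.trans ?_
    have : (X ^ 2 - 1 : ℝ[X]).natDegree ≤ 2 := by compute_degree
    nlinarith
  calc (legendrePoly n).natDegree
      ≤ (derivative^[n] ((X ^ 2 - 1 : ℝ[X]) ^ n)).natDegree := natDegree_C_mul_le _ _
    _ ≤ ((X ^ 2 - 1 : ℝ[X]) ^ n).natDegree - n := natDegree_iterate_derivative _ _
    _ ≤ n := by omega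

theorem integral_eval_mul_legendreP_eq_zero {n : ℕ} {q : ℝ[X]} (hq : q.natDegree < n) :
    ∫ t in (-1 : ℝ)..1, q.eval t * legendreP n t = 0 := by
  have hroots : ∀ k < n, (derivative^[k] ((X ^ 2 - 1 : ℝ[X]) ^ n)).IsRoot (-1) ∧
      (derivative^[k] ((X ^ 2 - 1 : ℝ[X]) ^ n)).IsRoot 1 := fun k hk =>
    ⟨isRoot_iterate_derivative_pow_of_lt (by simp) hk,
      isRoot_iterate_derivative_pow_of_lt (by simp) hk⟩
  simp_rw [legendreP_eq_eval, legendrePoly, eval_mul, eval_C, mul_left_comm _ (1 / _ : ℝ),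
    mul_comm (eval _ q)]
  rw [intervalIntegral.integral_const_mul, integral_iterate_derivative_mul_eq hroots,
    iterate_derivative_eq_zero hq]
  simp

theorem integral_legendreP_mul_legendreP_mul_legendreP_eq_zero {a b c : ℕ} (h : a + b < c) :
    ∫ t in (-1 : ℝ)..1, legendreP a t * legendreP b t * legendreP c t = 0 := by
  have hdeg : (legendrePoly a * legendrePoly b).natDegree < c :=
    natDegree_mul_le.trans_lt
      ((add_le_add (natDegree_legendrePoly_le a) (natDegree_legendrePoly_le b)).trans_lt h)
  simpa only [eval_mul, ← legendreP_eq_eval] using integral_eval_mul_legendreP_eq_zero hdeg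

theorem legendre_triple_product_vanishes (ℓ ℓ' m : ℕ)
    (h : (m : ℤ) < |(ℓ : ℤ) - (ℓ' : ℤ)| ∨ ℓ + ℓ' < m) :
    ∫ t in (-1:ℝ)..1, legendreP ℓ t * legendreP ℓ' t * legendreP m t = 0 := by
  have hcases : ℓ' + m < ℓ ∨ ℓ + m < ℓ' ∨ ℓ + ℓ' < m := by
    rcases h with h | h
    · rcases lt_abs.mp h with h | h <;> omega
    · omega
  rcases hcases with h | h | h
  · rw [← integral_legendreP_mul_legendreP_mul_legendreP_eq_zero h]
    congr 1; ext t; ring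
  · rw [← integral_legendreP_mul_legendreP_mul_legendreP_eq_zero h]
    congr 1; ext t; ring
  · exact integral_legendreP_mul_legendreP_mul_legendreP_eq_zero h
end

section
/- Let ε > 0. There exists a constant C_ε > 0 such that for all r, r' > 0: r^2 ∫_{-1}^{1} (1 + r^2 + r'^2 - 2 r r' t)^{-(1+ε)} dt ≤ C_ε. -/
/-!
With `x = 1 + (r - r')²` and `b = 2 r r'`, the substitution `u = 1 + r² + r'² - b t` turns the
integral into `b⁻¹ ∫ₓ^{x + 2b} u^{-(1+ε)} du ≤ 1 / (ε b)`, so `r²` times it is at most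
`r / (2 ε r') ≤ 1 / ε` when `r ≤ 2 r'`. When `2 r' ≤ r` the integrand alone is small:
it is at most `x⁻¹ ≤ (1 + r² / 4)⁻¹`, and `2 r² / (1 + r² / 4) ≤ 8`.
-/

open Real intervalIntegral

lemma integral_sub_mul_rpow_neg_one_sub {a b ε : ℝ} (hb : 0 < b) (hab : b < a) (hε : 0 < ε) :
    ∫ t in (-1:ℝ)..1, (a - b * t) ^ (-(1 + ε)) = ((a - b) ^ (-ε) - (a + b) ^ (-ε)) / (b * ε) := by
  have h0 : (0:ℝ) ∉ Set.uIcc (a - b) (a + b) := by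
    rw [Set.uIcc_of_le (by linarith)]
    exact fun h => by linarith [h.1]
  rw [integral_comp_sub_mul (fun u => u ^ (-(1 + ε))) hb.ne' a,
    integral_rpow (Or.inr ⟨by linarith, by simpa using h0⟩)]
  simp only [smul_eq_mul, mul_neg, mul_one, sub_neg_eq_add, show -(1 + ε) + 1 = -ε by ring]
  field_simp
  ring

lemma one_add_sq_sub_le {r r' t : ℝ} (hrr' : 0 ≤ r * r') (ht : t ≤ 1) :
    1 + (r - r') ^ 2 ≤ 1 + r ^ 2 + r' ^ 2 - 2 * r * r' * t := by
  nlinarith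

lemma sq_mul_integral_le_inv_of_le_two_mul {ε r r' : ℝ} (hε : 0 < ε) (hr : 0 < r) (hr' : 0 < r')
    (hrr' : r ≤ 2 * r') :
    r ^ 2 * ∫ t in (-1:ℝ)..1, (1 + r ^ 2 + r' ^ 2 - 2 * r * r' * t) ^ (-(1 + ε)) ≤ 1 / ε := by
  have hb : 0 < 2 * r * r' := by positivity
  rw [integral_sub_mul_rpow_neg_one_sub hb (by nlinarith [sq_nonneg (r - r')]) hε]
  have hx : (1 + r ^ 2 + r' ^ 2 - 2 * r * r') ^ (-ε) ≤ 1 :=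
    rpow_le_one_of_one_le_of_nonpos (by nlinarith [sq_nonneg (r - r')]) (by linarith)
  have hy : 0 ≤ (1 + r ^ 2 + r' ^ 2 + 2 * r * r') ^ (-ε) := by positivity
  calc r ^ 2 * (((1 + r ^ 2 + r' ^ 2 - 2 * r * r') ^ (-ε)
          - (1 + r ^ 2 + r' ^ 2 + 2 * r * r') ^ (-ε)) / (2 * r * r' * ε))
      ≤ r ^ 2 * (1 / (2 * r * r' * ε)) := by gcongr; linarith
    _ = r / (2 * r' * ε) := by field_simp
    _ ≤ 1 / ε := by
      rw [div_le_div_iff₀ (by positivity) hε]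
      nlinarith

lemma sq_mul_integral_le_eight_of_two_mul_le {ε r r' : ℝ} (hε : 0 < ε) (hr' : 0 < r')
    (hrr' : 2 * r' ≤ r) :
    r ^ 2 * ∫ t in (-1:ℝ)..1, (1 + r ^ 2 + r' ^ 2 - 2 * r * r' * t) ^ (-(1 + ε)) ≤ 8 := by
  have hr : 0 < r := by linarith
  have hbound : ∀ t ∈ Set.uIoc (-1:ℝ) 1,
      ‖(1 + r ^ 2 + r' ^ 2 - 2 * r * r' * t) ^ (-(1 + ε))‖ ≤ (1 + r ^ 2 / 4)⁻¹ := by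
    intro t ht
    rw [Set.uIoc_of_le (by norm_num)] at ht
    have hu : 1 + r ^ 2 / 4 ≤ 1 + r ^ 2 + r' ^ 2 - 2 * r * r' * t :=
      le_trans (by nlinarith) (one_add_sq_sub_le (by positivity) ht.2)
    have hu1 : 1 ≤ 1 + r ^ 2 + r' ^ 2 - 2 * r * r' * t := le_trans (le_add_of_nonneg_right (by positivity)) hu
    rw [norm_of_nonneg (by positivity)]
    calc (1 + r ^ 2 + r' ^ 2 - 2 * r * r' * t) ^ (-(1 + ε))
        ≤ (1 + r ^ 2 + r' ^ 2 - 2 * r * r' * t) ^ (-1 : ℝ) :=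
          rpow_le_rpow_of_exponent_le hu1 (by linarith)
      _ ≤ (1 + r ^ 2 / 4)⁻¹ := by rw [rpow_neg_one]; gcongr
  have hI := (le_abs_self _).trans (norm_integral_le_of_norm_le_const hbound)
  calc r ^ 2 * ∫ t in (-1:ℝ)..1, (1 + r ^ 2 + r' ^ 2 - 2 * r * r' * t) ^ (-(1 + ε))
      ≤ r ^ 2 * ((1 + r ^ 2 / 4)⁻¹ * |1 - -1|) := by gcongr
    _ ≤ 8 := by
      rw [show |(1:ℝ) - -1| = 2 by norm_num, ← div_eq_inv_mul, mul_div_assoc',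
        div_le_iff₀ (by positivity)]
      nlinarith

theorem uniform_bound_eps (ε : ℝ) (hε : 0 < ε) :
    ∃ C > 0, ∀ r r' : ℝ, 0 < r → 0 < r' →
      r ^ 2 * ∫ t in (-1:ℝ)..1,
          (1 + r ^ 2 + r' ^ 2 - 2 * r * r' * t) ^ (-(1 + ε)) ≤ C := by
  refine ⟨max (1 / ε) 8, by positivity, fun r r' hr hr' => ?_⟩
  rcases le_total r (2 * r') with hrr' | hrr'
  · exact (sq_mul_integral_le_inv_of_le_two_mul hε hr hr' hrr').trans (le_max_left _ _)
  · exact (sq_mul_integral_le_eight_of_two_mul_le hε hr' hrr').trans (le_max_right _ _)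
end

section
/- Define C_{ℓ,ℓ'} := sup_{x ∈ [-1,1)} |P_ℓ(x) - P_{ℓ'}(x)| / (1 - x). Then for all nonnegative integers ℓ < ℓ', one has C_{ℓ,ℓ'} ≤ Σ_{n=ℓ+1}^{ℓ'} (2 + n); in particular C_{ℓ,ℓ'} ≤ C (1 + ℓ + ℓ') |ℓ - ℓ'| for a universal constant C. -/
noncomputable def legC (ℓ ℓ' : ℕ) : ℝ :=
  sSup ((fun x : ℝ => |legendreP ℓ x - legendreP ℓ' x| / (1 - x)) '' Set.Ico (-1:ℝ) 1)

/-!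
Write `Rₙ = Dⁿ (x² - 1)ⁿ`, so that `Pₙ = Rₙ / (2ⁿ n!)`. Leibniz' rule applied to
`D (x² - 1)ⁿ⁺¹ = 2 (n + 1) x (x² - 1)ⁿ` and to `(x² - 1) D (x² - 1)ⁿ = 2 n x (x² - 1)ⁿ` gives
`P'ₙ₊₁ = x P'ₙ + (n + 1) Pₙ` and the Legendre equation. Together they show that
`Rₙ₊₁ - 2 (x² - 1) R'ₙ - 2 (n + 1) x Rₙ` has zero derivative; it vanishes at `x = 1`, whence
`(x² - 1) P'ₙ₊₁ = (n + 1) (x Pₙ₊₁ - Pₙ)`. The Legendre equation makes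
`n (n + 1) Pₙ² + (1 - x²) P'ₙ²` increase away from `0`, so on `[-1, 1]` it is at most its value
`n (n + 1)` at `±1`: `|Pₙ| ≤ 1`, and then the first recurrence gives `|P'ₙ| ≤ n (n + 1) / 2`.
Finally `(n + 1) (Pₙ₊₁ - Pₙ) = (1 - x) ((n + 1) Pₙ₊₁ - (1 + x) P'ₙ₊₁)` bounds each step
`|Pₙ₊₁ - Pₙ|` by `(1 - x) (n + 3)`, and the estimate on `C_{ℓ,ℓ'}` follows by telescoping.
-/

open Polynomial Set

theorem le_max_of_forall_mul_deriv_nonneg {f f' : ℝ → ℝ} (hf : ∀ y, HasDerivAt f (f' y) y)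
    (hf' : ∀ y, 0 ≤ y * f' y) {a b x : ℝ} (hx : x ∈ Icc a b) : f x ≤ max (f a) (f b) := by
  have hcont : Continuous f := continuous_iff_continuousAt.mpr fun y => (hf y).continuousAt
  rcases le_total 0 x with hx0 | hx0
  · have hmono : MonotoneOn f (Ici 0) :=
      monotoneOn_of_hasDerivWithinAt_nonneg (convex_Ici 0) hcont.continuousOn
        (fun y _ => (hf y).hasDerivWithinAt) fun y hy =>
          nonneg_of_mul_nonneg_right (hf' y) (by rwa [interior_Ici] at hy)
    exact le_max_of_le_right (hmono hx0 (hx0.trans hx.2) hx.2)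
  · have hanti : AntitoneOn f (Iic 0) :=
      antitoneOn_of_hasDerivWithinAt_nonpos (convex_Iic 0) hcont.continuousOn
        (fun y _ => (hf y).hasDerivWithinAt) fun y hy =>
          nonpos_of_mul_nonneg_right (hf' y) (by rwa [interior_Iic] at hy)
    exact le_max_of_le_left (hanti (hx.1.trans hx0) hx0 hx.1)

namespace Polynomial

section Rodrigues

variable {R : Type*} [CommRing R]

theorem iterate_derivative_X_mul_succ (m : ℕ) (p : R[X]) :
    derivative^[m + 1] (X * p) = X * derivative^[m + 1] p + (m + 1 : R[X]) * derivative^[m] p := by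
  rw [mul_comm, iterate_derivative_mul_X, nsmul_eq_mul, add_tsub_cancel_right]
  push_cast
  ring

theorem iterate_derivative_X_sq_sub_one_mul (m : ℕ) (p : R[X]) :
    derivative^[m + 2] ((X ^ 2 - 1) * p) = (X ^ 2 - 1) * derivative^[m + 2] p
      + 2 * (m + 2 : R[X]) * X * derivative^[m + 1] p
      + (m + 2 : R[X]) * (m + 1 : R[X]) * derivative^[m] p := by
  rw [show (X ^ 2 - 1) * p = X * (X * p) - p by ring, iterate_derivative_sub,
    iterate_derivative_X_mul_succ (m + 1), iterate_derivative_X_mul_succ (m + 1),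
    iterate_derivative_X_mul_succ m]
  push_cast
  ring

-- The factor is cast from `ℕ` so that `iterate_derivative_natCast_mul` applies.
theorem derivative_X_sq_sub_one_pow_succ (n : ℕ) :
    derivative ((X ^ 2 - 1 : R[X]) ^ (n + 1)) =
      ((2 * (n + 1) : ℕ) : R[X]) * (X * (X ^ 2 - 1) ^ n) := by
  simp [derivative_pow, C_ofNat]
  ring

noncomputable def rodrigues (n : ℕ) : R[X] := derivative^[n] ((X ^ 2 - 1) ^ n)

theorem derivative_rodrigues (n : ℕ) :
    derivative (rodrigues n : R[X]) = derivative^[n + 1] ((X ^ 2 - 1) ^ n) :=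
  (Function.iterate_succ_apply' _ _ _).symm

theorem derivative_rodrigues_succ (n : ℕ) :
    derivative (rodrigues (n + 1) : R[X]) =
      2 * (n + 1 : R[X]) * (X * derivative (rodrigues n) + (n + 1 : R[X]) * rodrigues n) := by
  rw [derivative_rodrigues, Function.iterate_succ_apply, derivative_X_sq_sub_one_pow_succ,
    iterate_derivative_natCast_mul, iterate_derivative_X_mul_succ, ← derivative_rodrigues]
  push_cast
  rfl

theorem rodrigues_ode (n : ℕ) :
    (X ^ 2 - 1) * derivative (derivative (rodrigues n : R[X])) + 2 * X * derivative (rodrigues n)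
      = (n : R[X]) * (n + 1 : R[X]) * rodrigues n := by
  rcases n with _ | m
  · simp [rodrigues]
  have key := congrArg (derivative^[m + 2])
    (show (X ^ 2 - 1) * derivative ((X ^ 2 - 1 : R[X]) ^ (m + 1))
      = ((2 * (m + 1) : ℕ) : R[X]) * (X * (X ^ 2 - 1) ^ (m + 1)) by
        rw [derivative_X_sq_sub_one_pow_succ]; ring)
  rw [iterate_derivative_X_sq_sub_one_mul, iterate_derivative_natCast_mul,
    iterate_derivative_X_mul_succ] at key
  have hc : ∀ p : R[X], derivative^[m] (derivative p) = derivative (derivative^[m] p) :=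
    Function.Commute.iterate_self derivative m
  simp only [rodrigues, Function.iterate_succ_apply', hc] at key ⊢
  push_cast at key ⊢
  linear_combination key

theorem eval_iterate_derivative_X_sub_C_pow_mul (n : ℕ) (a : R) (q : R[X]) :
    (derivative^[n] ((X - C a) ^ n * q)).eval a = n.factorial * q.eval a := by
  rw [iterate_derivative_mul, eval_finsetSum,
    Finset.sum_eq_single_of_mem 0 (Finset.mem_range.mpr n.succ_pos)]
  · simp [iterate_derivative_X_sub_pow_self]
  · intro k hk hk0
    rw [iterate_derivative_X_sub_pow,
      Nat.sub_sub_self (Nat.lt_succ_iff.mp (Finset.mem_range.mp hk))]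
    simp [zero_pow hk0]

theorem rodrigues_eval_one (n : ℕ) : (rodrigues n : R[X]).eval 1 = 2 ^ n * n.factorial := by
  rw [rodrigues, show (X ^ 2 - 1 : R[X]) ^ n = (X - C 1) ^ n * (X + 1) ^ n by
    rw [← mul_pow, map_one]; ring, eval_iterate_derivative_X_sub_C_pow_mul]
  norm_num
  ring

theorem rodrigues_eval_neg_one (n : ℕ) :
    (rodrigues n : R[X]).eval (-1) = (-2) ^ n * n.factorial := by
  rw [rodrigues, show (X ^ 2 - 1 : R[X]) ^ n = (X - C (-1)) ^ n * (X - 1) ^ n by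
    rw [← mul_pow, map_neg, map_one]; ring, eval_iterate_derivative_X_sub_C_pow_mul]
  norm_num
  ring

theorem rodrigues_succ [IsAddTorsionFree R] (n : ℕ) :
    (rodrigues (n + 1) : R[X]) =
      2 * ((X ^ 2 - 1) * derivative (rodrigues n) + (n + 1 : R[X]) * X * rodrigues n) := by
  set r : R[X] := rodrigues (n + 1) -
    2 * ((X ^ 2 - 1) * derivative (rodrigues n) + (n + 1 : R[X]) * X * rodrigues n) with hr
  have hr' : derivative r = 0 := by
    simp only [hr, derivative_sub, derivative_mul, derivative_add, derivative_X, derivative_natCast,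
      derivative_ofNat, derivative_X_pow, derivative_one, derivative_rodrigues_succ,
      Nat.cast_ofNat, map_ofNat]
    linear_combination (-2 : R[X]) * rodrigues_ode (R := R) n
  have hr1 : r.eval 1 = 0 := by
    simp [hr, rodrigues_eval_one, Nat.factorial_succ, pow_succ]
    ring
  have hrC := eq_C_of_derivative_eq_zero hr'
  rw [hrC, eval_C] at hr1
  rw [← sub_eq_zero, ← hr, hrC, hr1, C_0]

end Rodrigues

section Legendre

variable {K : Type*} [Field K]

noncomputable def legendre (n : ℕ) : K[X] := C (2 ^ n * n.factorial : K)⁻¹ * rodrigues n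

@[simp] theorem legendre_zero : (legendre 0 : K[X]) = 1 := by
  simp [legendre, rodrigues]

variable [CharZero K]

theorem two_pow_mul_factorial_ne_zero (n : ℕ) : (2 ^ n * n.factorial : K) ≠ 0 :=
  mul_ne_zero (pow_ne_zero n two_ne_zero) (Nat.cast_ne_zero.mpr n.factorial_ne_zero)

theorem rodrigues_eq_C_mul_legendre (n : ℕ) :
    (rodrigues n : K[X]) = C (2 ^ n * n.factorial : K) * legendre n := by
  rw [legendre, ← mul_assoc, ← C_mul, mul_inv_cancel₀ (two_pow_mul_factorial_ne_zero n), C_1,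
    one_mul]

theorem rodrigues_succ_eq_C_mul_legendre (n : ℕ) :
    (rodrigues (n + 1) : K[X]) =
      C (2 ^ n * n.factorial : K) * (2 * (n + 1 : K[X]) * legendre (n + 1)) := by
  rw [rodrigues_eq_C_mul_legendre, Nat.factorial_succ, pow_succ]
  simp only [Nat.cast_mul, map_mul, map_pow, map_natCast, Nat.cast_add, Nat.cast_one, map_ofNat,
    map_add, map_one]
  ring

theorem derivative_legendre_succ (n : ℕ) :
    derivative (legendre (n + 1) : K[X]) =
      X * derivative (legendre n) + (n + 1 : K[X]) * legendre n := by
  have h := derivative_rodrigues_succ (R := K) n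
  rw [rodrigues_succ_eq_C_mul_legendre, rodrigues_eq_C_mul_legendre] at h
  simp only [derivative_mul, derivative_C, derivative_ofNat, derivative_add, derivative_natCast,
    derivative_one, zero_mul, zero_add, add_zero] at h
  refine mul_left_cancel₀ (mul_ne_zero (C_ne_zero.mpr (two_pow_mul_factorial_ne_zero n))
    (mul_ne_zero two_ne_zero (Nat.cast_add_one_ne_zero n))) ?_
  linear_combination h

theorem legendre_ode (n : ℕ) :
    (X ^ 2 - 1) * derivative (derivative (legendre n : K[X])) + 2 * X * derivative (legendre n)
      = (n : K[X]) * (n + 1 : K[X]) * legendre n := by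
  have h := rodrigues_ode (R := K) n
  rw [rodrigues_eq_C_mul_legendre] at h
  simp only [derivative_mul, derivative_C, zero_mul, zero_add] at h
  refine mul_left_cancel₀ (C_ne_zero.mpr (two_pow_mul_factorial_ne_zero n)) ?_
  linear_combination h

theorem natCast_add_one_mul_legendre_succ (n : ℕ) :
    (n + 1 : K[X]) * legendre (n + 1) =
      (X ^ 2 - 1) * derivative (legendre n) + (n + 1 : K[X]) * X * legendre n := by
  have h := rodrigues_succ (R := K) n
  rw [rodrigues_succ_eq_C_mul_legendre, rodrigues_eq_C_mul_legendre] at h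
  simp only [derivative_mul, derivative_C, zero_mul, zero_add] at h
  refine mul_left_cancel₀
    (mul_ne_zero (C_ne_zero.mpr (two_pow_mul_factorial_ne_zero n)) two_ne_zero) ?_
  linear_combination h

theorem X_sq_sub_one_mul_derivative_legendre_succ (n : ℕ) :
    (X ^ 2 - 1) * derivative (legendre (n + 1) : K[X]) =
      (n + 1 : K[X]) * (X * legendre (n + 1) - legendre n) := by
  linear_combination (X ^ 2 - 1 : K[X]) * derivative_legendre_succ (K := K) n
    - X * natCast_add_one_mul_legendre_succ (K := K) n

@[simp] theorem legendre_eval_one (n : ℕ) : (legendre n : K[X]).eval 1 = 1 := by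
  rw [legendre, eval_mul, eval_C, rodrigues_eval_one,
    inv_mul_cancel₀ (two_pow_mul_factorial_ne_zero n)]

@[simp] theorem legendre_eval_neg_one (n : ℕ) : (legendre n : K[X]).eval (-1) = (-1) ^ n := by
  rw [legendre, eval_mul, eval_C, rodrigues_eval_neg_one, show (-2 : K) = -1 * 2 by norm_num,
    mul_pow, mul_assoc, mul_comm ((-1 : K) ^ n),
    inv_mul_cancel_left₀ (two_pow_mul_factorial_ne_zero n)]

theorem derivative_legendre_lyapunov (n : ℕ) :
    derivative ((n : K[X]) * (n + 1 : K[X]) * legendre n ^ 2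
        + (1 - X ^ 2) * derivative (legendre n) ^ 2) = 2 * X * derivative (legendre n) ^ 2 := by
  simp only [derivative_add, derivative_mul, derivative_natCast, derivative_one, derivative_sub,
    derivative_pow, derivative_X, Nat.cast_ofNat, map_ofNat]
  linear_combination (-2 * derivative (legendre n)) * legendre_ode (K := K) n

end Legendre

theorem iteratedDeriv_eval_s12 {𝕜 : Type*} [NontriviallyNormedField 𝕜] (p : 𝕜[X]) (k : ℕ) :
    iteratedDeriv k (fun x => p.eval x) = fun x => (derivative^[k] p).eval x := by
  induction k with
  | zero => simp
  | succ k ih =>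
    ext x
    rw [iteratedDeriv_succ, ih, Function.iterate_succ_apply', Polynomial.deriv]

theorem abs_eval_legendre_le_one (n : ℕ) {x : ℝ} (hx : x ∈ Icc (-1) 1) :
    |(legendre n : ℝ[X]).eval x| ≤ 1 := by
  rcases n.eq_zero_or_pos with rfl | hn
  · simp
  have hG' := derivative_legendre_lyapunov (K := ℝ) n
  set G : ℝ[X] := (n : ℝ[X]) * (n + 1 : ℝ[X]) * legendre n ^ 2
    + (1 - X ^ 2) * derivative (legendre n) ^ 2
  have hG := le_max_of_forall_mul_deriv_nonneg (fun y => G.hasDerivAt y) (fun y => by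
      rw [hG', eval_mul, eval_mul, eval_pow, eval_X, eval_ofNat]
      nlinarith [sq_nonneg (y * eval y (derivative (legendre n)))]) hx
  simp only [G, eval_add, eval_mul, eval_pow, eval_sub, eval_one, eval_X, eval_natCast,
    legendre_eval_one, legendre_eval_neg_one, ← pow_mul] at hG
  norm_num at hG
  have hx2 : 0 ≤ 1 - x ^ 2 := by nlinarith [hx.1, hx.2]
  have hN : (0 : ℝ) < n * (n + 1) := by positivity
  rw [← sq_le_one_iff_abs_le_one, ← mul_le_mul_iff_right₀ hN, mul_one]
  nlinarith [mul_nonneg hx2 (sq_nonneg (eval x (derivative (legendre n))))]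

theorem abs_eval_derivative_legendre_le (n : ℕ) {x : ℝ} (hx : x ∈ Icc (-1) 1) :
    |(derivative (legendre n : ℝ[X])).eval x| ≤ n * (n + 1) / 2 := by
  induction n with
  | zero => simp
  | succ n ih =>
    rw [derivative_legendre_succ, eval_add, eval_mul, eval_mul, eval_X]
    have hxabs : |x| ≤ 1 := abs_le.mpr hx
    calc |x * eval x (derivative (legendre n)) + eval x (n + 1 : ℝ[X]) * eval x (legendre n)|
        ≤ |x| * |eval x (derivative (legendre n))| + (n + 1) * |eval x (legendre n)| := by
          refine (abs_add_le _ _).trans_eq ?_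
          simp only [abs_mul, eval_add, eval_natCast, eval_one]
          rw [abs_of_nonneg (by positivity : (0 : ℝ) ≤ n + 1)]
      _ ≤ 1 * (n * (n + 1) / 2) + (n + 1) * 1 := by
          gcongr
          · exact abs_eval_legendre_le_one n hx
      _ = ((n + 1 : ℕ) : ℝ) * ((n + 1 : ℕ) + 1) / 2 := by push_cast; ring

theorem abs_eval_legendre_succ_sub_le (n : ℕ) {x : ℝ} (hx : x ∈ Icc (-1) 1) :
    |(legendre (n + 1) : ℝ[X]).eval x - (legendre n).eval x| ≤ (1 - x) * (n + 3) := by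
  have hrec := congrArg (eval x) (X_sq_sub_one_mul_derivative_legendre_succ (K := ℝ) n)
  simp only [eval_mul, eval_sub, eval_pow, eval_X, eval_one, eval_add, eval_natCast] at hrec
  set p := (legendre (n + 1) : ℝ[X]).eval x
  set dp := (derivative (legendre (n + 1) : ℝ[X])).eval x
  have hid : (n + 1) * (p - (legendre n).eval x) = (1 - x) * ((n + 1) * p - (1 + x) * dp) := by
    linear_combination -hrec
  have hp : |p| ≤ 1 := abs_eval_legendre_le_one (n + 1) hx
  have hdp : |dp| ≤ (n + 1) * (n + 2) / 2 := by
    have := abs_eval_derivative_legendre_le (n + 1) hx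
    push_cast at this
    linarith
  have h1x : 0 ≤ 1 - x := by linarith [hx.2]
  have h1x' : 0 ≤ 1 + x := by linarith [hx.1]
  have hbound : |(n + 1) * p - (1 + x) * dp| ≤ (n + 1) * (n + 3) := by
    calc |(n + 1) * p - (1 + x) * dp| ≤ (n + 1) * |p| + (1 + x) * |dp| := by
          refine (abs_sub _ _).trans_eq ?_
          rw [abs_mul, abs_mul, abs_of_nonneg h1x', abs_of_nonneg (by positivity : (0 : ℝ) ≤ n + 1)]
      _ ≤ (n + 1) * 1 + 2 * ((n + 1) * (n + 2) / 2) := by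
          gcongr
          linarith [hx.2]
      _ = (n + 1) * (n + 3) := by ring
  have hpos : (0 : ℝ) < n + 1 := by positivity
  rw [← mul_le_mul_iff_right₀ hpos, ← abs_of_pos hpos, ← abs_mul, hid, abs_mul, abs_of_nonneg h1x,
    abs_of_pos hpos]
  nlinarith

theorem abs_eval_legendre_sub_le {ℓ ℓ' : ℕ} (h : ℓ ≤ ℓ') {x : ℝ} (hx : x ∈ Icc (-1) 1) :
    |(legendre ℓ : ℝ[X]).eval x - (legendre ℓ').eval x|
      ≤ (1 - x) * ∑ n ∈ Finset.Icc (ℓ + 1) ℓ', ((2 : ℝ) + n) := by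
  have := dist_le_Ico_sum_of_dist_le (f := fun n => (legendre n : ℝ[X]).eval x)
    (d := fun n => (1 - x) * (2 + ((n + 1 : ℕ) : ℝ))) h fun {n} _ _ => by
      rw [Real.dist_eq, abs_sub_comm]
      push_cast
      linarith [abs_eval_legendre_succ_sub_le n hx]
  rwa [Real.dist_eq, Finset.sum_Ico_add' (fun n : ℕ => (1 - x) * (2 + (n : ℝ))),
    Finset.Ico_add_one_right_eq_Icc, ← Finset.mul_sum] at this

end Polynomial

theorem legendreP_eq_eval_legendre (n : ℕ) (x : ℝ) : legendreP n x = (legendre n).eval x := by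
  have h : (fun y : ℝ => (y ^ 2 - 1) ^ n) = fun y => ((X ^ 2 - 1 : ℝ[X]) ^ n).eval y := by
    simp
  rw [legendreP, h, iteratedDeriv_eval_s12, legendre, eval_mul, eval_C, rodrigues, one_div]

theorem legC_le_sum {ℓ ℓ' : ℕ} (h : ℓ ≤ ℓ') :
    legC ℓ ℓ' ≤ ∑ n ∈ Finset.Icc (ℓ + 1) ℓ', ((2 : ℝ) + n) := by
  refine Real.sSup_le ?_ (Finset.sum_nonneg fun n _ => by positivity)
  rintro _ ⟨x, hx, rfl⟩
  have h1x : 0 < 1 - x := by linarith [hx.2]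
  rw [div_le_iff₀ h1x, legendreP_eq_eval_legendre, legendreP_eq_eval_legendre, mul_comm]
  exact abs_eval_legendre_sub_le h (Ico_subset_Icc_self hx)

theorem sum_Icc_two_add_le (ℓ ℓ' : ℕ) (h : ℓ ≤ ℓ') :
    ∑ n ∈ Finset.Icc (ℓ + 1) ℓ', ((2 : ℝ) + n) ≤ 3 * (1 + (ℓ : ℝ) + ℓ') * ((ℓ' : ℝ) - ℓ) := by
  have hle : ∑ n ∈ Finset.Icc (ℓ + 1) ℓ', ((2 : ℝ) + n) ≤ (ℓ' - ℓ : ℕ) * (2 + ℓ') := by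
    refine (Finset.sum_le_card_nsmul _ _ (2 + ℓ' : ℝ) fun n hn => ?_).trans_eq ?_
    · have : (n : ℝ) ≤ ℓ' := by exact_mod_cast (Finset.mem_Icc.mp hn).2
      linarith
    · rw [Nat.card_Icc, nsmul_eq_mul, Nat.add_sub_add_right]
  rw [Nat.cast_sub h] at hle
  have : (ℓ : ℝ) ≤ ℓ' := by exact_mod_cast h
  nlinarith [(Nat.cast_nonneg ℓ : (0 : ℝ) ≤ ℓ)]

theorem legC_bound :
    (∀ ℓ ℓ' : ℕ, ℓ < ℓ' →
      legC ℓ ℓ' ≤ ∑ n ∈ Finset.Icc (ℓ + 1) ℓ', ((2 : ℝ) + n)) ∧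
    ∃ C > 0, ∀ ℓ ℓ' : ℕ, ℓ < ℓ' →
      legC ℓ ℓ' ≤ C * (1 + (ℓ : ℝ) + ℓ') * ((ℓ' : ℝ) - ℓ) :=
  ⟨fun _ _ h => legC_le_sum h.le,
    3, by norm_num, fun ℓ ℓ' h => (legC_le_sum h.le).trans (sum_Icc_two_add_le ℓ ℓ' h.le)⟩
end

section
/- For u ∈ (0,1), one has ∫_{-1}^{1} (1 - α)/(1 - u α)^2 dα = [(1+u) log((1+u)/(1-u)) - 2u] / (u^2 (1+u)), and this quantity is bounded above by 2 - log(1 - u). -/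
/-! The integrand has the explicit primitive `-(log (1 - u α) + (1 - u) / (1 - u α)) / u ^ 2`,
which gives the closed form. For the bound, after clearing denominators it suffices to have
`log (1 + u) ≤ u - u² / 2 + u³ / 3` and `(1 - u²) log (1 - u) ≥ -(u + u² / 2)`; both follow
from the sign of a derivative, and with them the claim reduces to `u⁴ ≤ 5 u³`. -/

open Real Set

theorem le_of_hasDerivAt_nonneg {f f' : ℝ → ℝ} {a b : ℝ} (hab : a ≤ b)
    (hf : ContinuousOn f (Icc a b)) (hderiv : ∀ x ∈ Ioo a b, HasDerivAt f (f' x) x)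
    (hf' : ∀ x ∈ Ioo a b, 0 ≤ f' x) : f a ≤ f b := by
  refine monotoneOn_of_hasDerivWithinAt_nonneg (convex_Icc a b) hf (fun x hx => ?_)
    (fun x hx => hf' x (by simpa using hx)) (left_mem_Icc.2 hab) (right_mem_Icc.2 hab) hab
  exact (hderiv x (by simpa using hx)).hasDerivWithinAt

theorem log_one_add_le {x : ℝ} (hx : 0 ≤ x) : log (1 + x) ≤ x - x ^ 2 / 2 + x ^ 3 / 3 := by
  have key := le_of_hasDerivAt_nonneg (f := fun t => t - t ^ 2 / 2 + t ^ 3 / 3 - log (1 + t))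
    (f' := fun t => 1 - t + t ^ 2 - 1 / (1 + t)) hx ?_ ?_ ?_
  · simpa using key
  · refine ContinuousOn.sub (by fun_prop) (ContinuousOn.log (by fun_prop) fun t ht => ?_)
    linarith [ht.1]
  · intro t ht
    have hlog : HasDerivAt (fun t => log (1 + t)) (1 / (1 + t)) t := by
      simpa using ((hasDerivAt_id t).const_add 1).log (by simp only [id]; linarith [ht.1])
    refine ((((hasDerivAt_id t).sub ((hasDerivAt_pow 2 t).div_const 2)).add
      ((hasDerivAt_pow 3 t).div_const 3)).sub hlog).congr_deriv ?_
    norm_num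
  · intro t ht
    have h1t : 0 < 1 + t := by linarith [ht.1]
    -- `(1 - t + t²)(1 + t) = 1 + t³`
    rw [sub_nonneg, div_le_iff₀ h1t]
    nlinarith [pow_pos ht.1 3]

theorem neg_add_le_one_sub_sq_mul_log_one_sub {x : ℝ} (hx0 : 0 ≤ x) (hx1 : x < 1) :
    -(x + x ^ 2 / 2) ≤ (1 - x ^ 2) * log (1 - x) := by
  have key := le_of_hasDerivAt_nonneg (f := fun t => t + t ^ 2 / 2 + (1 - t ^ 2) * log (1 - t))
    (f' := fun t => -2 * t * log (1 - t)) hx0 ?_ ?_ ?_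
  · norm_num at key
    linarith
  · refine ContinuousOn.add (by fun_prop)
      (ContinuousOn.mul (by fun_prop) (ContinuousOn.log (by fun_prop) fun t ht => ?_))
    linarith [ht.2]
  · intro t ht
    have h1t : 1 - t ≠ 0 := by linarith [ht.2]
    have hlog : HasDerivAt (fun t => log (1 - t)) (-1 / (1 - t)) t := by
      simpa using ((hasDerivAt_id t).const_sub 1).log h1t
    refine (((hasDerivAt_id t).add ((hasDerivAt_pow 2 t).div_const 2)).add
      (((hasDerivAt_pow 2 t).const_sub 1).mul hlog)).congr_deriv ?_
    field_simp
    ring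
  · intro t ht
    have : log (1 - t) ≤ 0 := log_nonpos (by linarith [ht.2]) (by linarith [ht.1])
    nlinarith [ht.1]

theorem hasDerivAt_primitive_one_sub_div_one_sub_mul_sq {u α : ℝ} (hu : u ≠ 0)
    (hα : 1 - u * α ≠ 0) :
    HasDerivAt (fun α => -(log (1 - u * α) + (1 - u) / (1 - u * α)) / u ^ 2)
      ((1 - α) / (1 - u * α) ^ 2) α := by
  have hlin : HasDerivAt (fun α => 1 - u * α) (-u) α := by
    simpa using ((hasDerivAt_id α).const_mul u).const_sub 1
  refine (((hlin.log hα).add ((hasDerivAt_const α (1 - u)).div hlin hα)).neg.div_const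
    (u ^ 2)).congr_deriv ?_
  field_simp
  ring

theorem integral_one_sub_div_one_sub_mul_sq {u : ℝ} (hu0 : u ≠ 0) (hu : |u| < 1) :
    ∫ α in (-1 : ℝ)..1, (1 - α) / (1 - u * α) ^ 2
      = ((1 + u) * log ((1 + u) / (1 - u)) - 2 * u) / (u ^ 2 * (1 + u)) := by
  obtain ⟨hlt, hgt⟩ := abs_lt.1 hu
  have hpos : ∀ α ∈ uIcc (-1 : ℝ) 1, 0 < 1 - u * α := by
    intro α hα
    rw [uIcc_of_le (by norm_num)] at hα
    have hα1 : |α| ≤ 1 := abs_le.2 hα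
    have : u * α < 1 := calc
      u * α ≤ |u| * |α| := (le_abs_self _).trans (abs_mul u α).le
      _ ≤ |u| := mul_le_of_le_one_right (abs_nonneg u) hα1
      _ < 1 := hu
    linarith
  rw [intervalIntegral.integral_eq_sub_of_hasDerivAt
    (fun α hα => hasDerivAt_primitive_one_sub_div_one_sub_mul_sq hu0 (hpos α hα).ne')
    (ContinuousOn.intervalIntegrable (ContinuousOn.div (by fun_prop) (by fun_prop)
      fun α hα => (pow_pos (hpos α hα) 2).ne'))]
  have h1 : 1 - u * 1 = 1 - u := by ring
  have h2 : 1 - u * (-1) = 1 + u := by ring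
  have hplus : 1 + u ≠ 0 := by linarith
  rw [h1, h2, log_div hplus (by linarith)]
  field_simp
  ring

theorem div_le_two_sub_log_one_sub {u : ℝ} (hu : u ∈ Ioo (0 : ℝ) 1) :
    ((1 + u) * log ((1 + u) / (1 - u)) - 2 * u) / (u ^ 2 * (1 + u)) ≤ 2 - log (1 - u) := by
  obtain ⟨hu0, hu1⟩ := hu
  have hlog_plus := mul_le_mul_of_nonneg_left (log_one_add_le hu0.le) (by linarith : 0 ≤ 1 + u)
  have hlog_minus := mul_le_mul_of_nonneg_left (neg_add_le_one_sub_sq_mul_log_one_sub hu0.le hu1)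
    (by linarith : 0 ≤ 1 + u)
  rw [div_le_iff₀ (by positivity), log_div (by linarith) (by linarith)]
  nlinarith [pow_pos hu0 3]

theorem integral_one_sub_div_sq (u : ℝ) (hu : u ∈ Set.Ioo (0:ℝ) 1) :
    (∫ α in (-1:ℝ)..1, (1 - α) / (1 - u * α) ^ 2
        = ((1 + u) * Real.log ((1 + u) / (1 - u)) - 2 * u) / (u ^ 2 * (1 + u))) ∧
    ((1 + u) * Real.log ((1 + u) / (1 - u)) - 2 * u) / (u ^ 2 * (1 + u))
        ≤ 2 - Real.log (1 - u) :=
  ⟨integral_one_sub_div_one_sub_mul_sq hu.1.ne' (abs_lt.2 ⟨by linarith [hu.1], hu.2⟩),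
    div_le_two_sub_log_one_sub hu⟩
end
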